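/- Let L : ℝⁿ × ℝⁿ → ℝ be periodic in x with respect to ℤⁿ, continuous, satisfying L(x,v) ≥ θ(|v|) − c₀ with θ superlinear, and L(x,v) ≤ κ₁(|v|) where κ₁(r) = max_{z,|v|≤r} L(z,v). Then there exists t₀ > 0 such that for all 0 < t ≤ t₀ and all x, y, y' ∈ ℝⁿ with |y − x| < t, y − y' ∈ ℤⁿ \ {0} (so |y − y'| ≥ √n): A_t(x,y) ≤ A_t(x,y'), where A_t is the minimal action. Consequently the infimum defining the fundamental solution on the torus 𝕋ⁿ is attained at representatives x, y with |x − y| < t. -/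

import Mathlib

open Set Filter MeasureTheory intervalIntegral

/-
For `t ≤ t₀` the straight segment from `x` to `y` has speed `‖y - x‖ / t ≤ 1`, so
`A_t(x,y) ≤ t κ₁(1)`. Superlinearity of `θ` gives `L(x,v) ≥ ‖v‖ - K` for a constant `K`, so every
arc from `x` to `y'` has action at least `‖y' - x‖ - K t ≥ √n - t - K t`. The choice
`t₀ = √n / (κ₁(1) + K + 1)` makes the first bound smaller than the second.
-/

/-- The set of action values of admissible (absolutely continuous) arcs from `x` to `y`
in time `t`; the minimal action `A_t(x,y)` is its infimum. -/
def actionSet {n : ℕ} (L : EuclideanSpace ℝ (Fin n) → EuclideanSpace ℝ (Fin n) → ℝ)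
    (t : ℝ) (x y : EuclideanSpace ℝ (Fin n)) : Set ℝ :=
  {a | ∃ ξ ξ' : ℝ → EuclideanSpace ℝ (Fin n),
      IntervalIntegrable ξ' volume 0 t ∧
      IntervalIntegrable (fun s => L (ξ s) (ξ' s)) volume 0 t ∧
      (∀ s ∈ Set.Icc 0 t, ξ s = x + ∫ τ in (0:ℝ)..s, ξ' τ) ∧
      ξ 0 = x ∧ ξ t = y ∧
      a = ∫ s in (0:ℝ)..t, L (ξ s) (ξ' s)}

lemma exists_sub_le_of_tendsto_div_atTop {θ : ℝ → ℝ} (hθ0 : ∀ r, 0 ≤ r → 0 ≤ θ r)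
    (hθsl : Tendsto (fun r => θ r / r) atTop atTop) :
    ∃ R, ∀ r, 0 ≤ r → r - R ≤ θ r := by
  obtain ⟨R, hR⟩ := eventually_atTop.mp (hθsl.eventually (eventually_ge_atTop 1))
  refine ⟨max R 1, fun r hr => ?_⟩
  rcases le_or_gt r (max R 1) with h | h
  · linarith [hθ0 r hr]
  · have hr1 := hR r (le_trans (le_max_left _ _) h.le)
    rw [le_div_iff₀ (by linarith [le_max_right R 1]), one_mul] at hr1
    linarith [le_max_right R 1]

section Action

variable {n : ℕ} {L : EuclideanSpace ℝ (Fin n) → EuclideanSpace ℝ (Fin n) → ℝ}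

lemma continuous_lagrangian_along_line (hL : Continuous (Function.uncurry L))
    (x v : EuclideanSpace ℝ (Fin n)) : Continuous fun s : ℝ => L (x + s • v) v :=
  hL.comp ((continuous_const.add (continuous_id.smul continuous_const)).prodMk continuous_const)

lemma integral_segment_mem_actionSet (hL : Continuous (Function.uncurry L)) {t : ℝ} (ht : 0 < t)
    (x z : EuclideanSpace ℝ (Fin n)) :
    (∫ s in (0:ℝ)..t, L (x + s • (t⁻¹ • (z - x))) (t⁻¹ • (z - x))) ∈ actionSet L t x z := by
  refine ⟨fun s => x + s • (t⁻¹ • (z - x)), fun _ => t⁻¹ • (z - x), intervalIntegrable_const,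
    (continuous_lagrangian_along_line hL x _).intervalIntegrable 0 t, fun s _ => ?_, by simp, ?_,
    rfl⟩
  · rw [intervalIntegral.integral_const, sub_zero]
  · change x + t • t⁻¹ • (z - x) = z
    rw [smul_smul, mul_inv_cancel₀ ht.ne', one_smul, add_sub_cancel]

lemma sub_le_of_mem_actionSet {K : ℝ} (hlow : ∀ p v, ‖v‖ - K ≤ L p v) {t : ℝ} (ht : 0 ≤ t)
    {x z : EuclideanSpace ℝ (Fin n)} {a : ℝ} (ha : a ∈ actionSet L t x z) :
    ‖z - x‖ - K * t ≤ a := by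
  obtain ⟨ξ, ξ', hξ', hLξ, hrep, -, hξt, rfl⟩ := ha
  have hdisp : (∫ τ in (0:ℝ)..t, ξ' τ) = z - x := by
    rw [← hξt, hrep t ⟨ht, le_rfl⟩, add_sub_cancel_left]
  have hnorm : ‖z - x‖ ≤ ∫ s in (0:ℝ)..t, ‖ξ' s‖ :=
    hdisp ▸ intervalIntegral.norm_integral_le_integral_norm ht
  have hint : (∫ s in (0:ℝ)..t, (‖ξ' s‖ - K)) ≤ ∫ s in (0:ℝ)..t, L (ξ s) (ξ' s) :=
    intervalIntegral.integral_mono_on ht (hξ'.norm.sub intervalIntegrable_const) hLξ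
      fun s _ => hlow (ξ s) (ξ' s)
  rw [intervalIntegral.integral_sub hξ'.norm intervalIntegrable_const,
    intervalIntegral.integral_const, smul_eq_mul, sub_zero, mul_comm] at hint
  linarith

lemma sub_le_sInf_actionSet (hL : Continuous (Function.uncurry L)) {K : ℝ}
    (hlow : ∀ p v, ‖v‖ - K ≤ L p v) {t : ℝ} (ht : 0 < t) (x z : EuclideanSpace ℝ (Fin n)) :
    ‖z - x‖ - K * t ≤ sInf (actionSet L t x z) :=
  le_csInf ⟨_, integral_segment_mem_actionSet hL ht x z⟩
    fun _ ha => sub_le_of_mem_actionSet hlow ht.le ha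

lemma sInf_actionSet_le (hL : Continuous (Function.uncurry L)) {K : ℝ}
    (hlow : ∀ p v, ‖v‖ - K ≤ L p v) {κ : ℝ → ℝ} (hup : ∀ p v, L p v ≤ κ ‖v‖) {t : ℝ}
    (ht : 0 < t) (x z : EuclideanSpace ℝ (Fin n)) :
    sInf (actionSet L t x z) ≤ t * κ (‖z - x‖ / t) := by
  have hbdd : BddBelow (actionSet L t x z) :=
    ⟨_, fun _ ha => sub_le_of_mem_actionSet hlow ht.le ha⟩
  have hspeed : ‖t⁻¹ • (z - x)‖ = ‖z - x‖ / t := by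
    rw [norm_smul, norm_inv, Real.norm_of_nonneg ht.le, inv_mul_eq_div]
  refine (csInf_le hbdd (integral_segment_mem_actionSet hL ht x z)).trans ?_
  calc (∫ s in (0:ℝ)..t, L (x + s • (t⁻¹ • (z - x))) (t⁻¹ • (z - x)))
      ≤ ∫ _ in (0:ℝ)..t, κ (‖z - x‖ / t) :=
        intervalIntegral.integral_mono_on ht.le
          ((continuous_lagrangian_along_line hL x _).intervalIntegrable 0 t)
          intervalIntegrable_const
          fun s _ => hspeed ▸ hup _ _
    _ = t * κ (‖z - x‖ / t) := by
        rw [intervalIntegral.integral_const, smul_eq_mul, sub_zero]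

end Action

theorem stmt_17_general (n : ℕ) (hn : 0 < n)
    (L : EuclideanSpace ℝ (Fin n) → EuclideanSpace ℝ (Fin n) → ℝ)
    (hL : Continuous (Function.uncurry L))
    (θ κ₁ : ℝ → ℝ) (c₀ : ℝ)
    (hθ0 : ∀ r, 0 ≤ r → 0 ≤ θ r)
    (hθsl : Tendsto (fun r => θ r / r) atTop atTop)
    (hlow : ∀ x v, θ ‖v‖ - c₀ ≤ L x v)
    (hκmono : Monotone κ₁)
    (hup : ∀ x v, L x v ≤ κ₁ ‖v‖) :
    ∃ t₀ > (0 : ℝ), ∀ t, 0 < t → t ≤ t₀ →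
      ∀ x y y' : EuclideanSpace ℝ (Fin n), ∀ m : Fin n → ℤ, m ≠ 0 →
        y - y' = (WithLp.equiv 2 (Fin n → ℝ)).symm (fun i => (m i : ℝ)) →
        ‖y - x‖ < t → Real.sqrt n ≤ ‖y - y'‖ →
        sInf (actionSet L t x y) ≤ sInf (actionSet L t x y') := by
  obtain ⟨R, hR⟩ := exists_sub_le_of_tendsto_div_atTop hθ0 hθsl
  set K := R + c₀
  have hlin : ∀ p v, ‖v‖ - K ≤ L p v := fun p v => by
    linarith [hR ‖v‖ (norm_nonneg v), hlow p v]
  have hκ : -K ≤ κ₁ 1 :=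
    calc -K = ‖(0 : EuclideanSpace ℝ (Fin n))‖ - K := by simp
      _ ≤ L 0 0 := hlin 0 0
      _ ≤ κ₁ ‖(0 : EuclideanSpace ℝ (Fin n))‖ := hup 0 0
      _ ≤ κ₁ 1 := hκmono (by simp)
  have hD : 0 < κ₁ 1 + K + 1 := by linarith
  refine ⟨Real.sqrt n / (κ₁ 1 + K + 1), by positivity, ?_⟩
  intro t ht ht₀ x y y' _ _ _ hyx hsqrt
  have hslow : t * κ₁ (‖y - x‖ / t) ≤ t * κ₁ 1 :=
    mul_le_mul_of_nonneg_left (hκmono ((div_le_one ht).mpr hyx.le)) ht.le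
  have hshort : t * (κ₁ 1 + K + 1) ≤ Real.sqrt n := (le_div_iff₀ hD).mp ht₀
  have htri : ‖y - y'‖ ≤ ‖y - x‖ + ‖y' - x‖ := by
    simpa only [norm_sub_rev x y'] using norm_sub_le_norm_sub_add_norm_sub y x y'
  calc sInf (actionSet L t x y) ≤ t * κ₁ (‖y - x‖ / t) := sInf_actionSet_le hL hlin hup ht x y
    _ ≤ ‖y' - x‖ - K * t := by linarith
    _ ≤ sInf (actionSet L t x y') := sub_le_sInf_actionSet hL hlin ht x y'

/-- For a `ℤⁿ`-periodic Lagrangian `L` with superlinear lower bound `θ(|v|) − c₀` and upper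
bound `κ₁(|v|)`, there is `t₀ > 0` such that for all `0 < t ≤ t₀` and `x, y, y'` with
`|y − x| < t` and `y − y' ∈ ℤⁿ \ {0}` (so that `|y − y'| ≥ √n`), one has
`A_t(x,y) ≤ A_t(x,y')`; hence the infimum defining the fundamental solution on the torus
is attained at representatives at distance `< t`. -/
theorem stmt_17 (n : ℕ) (hn : 0 < n)
    (L : EuclideanSpace ℝ (Fin n) → EuclideanSpace ℝ (Fin n) → ℝ)
    (hL : Continuous (Function.uncurry L))
    (hper : ∀ (x v : EuclideanSpace ℝ (Fin n)) (m : Fin n → ℤ),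
      L (x + (WithLp.equiv 2 (Fin n → ℝ)).symm (fun i => (m i : ℝ))) v = L x v)
    (θ κ₁ : ℝ → ℝ) (c₀ : ℝ) (hc₀ : 0 < c₀)
    (hθ0 : ∀ r, 0 ≤ r → 0 ≤ θ r)
    (hθsl : Tendsto (fun r => θ r / r) atTop atTop)
    (hlow : ∀ x v, θ ‖v‖ - c₀ ≤ L x v)
    (hκmono : Monotone κ₁)
    (hup : ∀ x v, L x v ≤ κ₁ ‖v‖) :
    ∃ t₀ > (0 : ℝ), ∀ t, 0 < t → t ≤ t₀ →
      ∀ x y y' : EuclideanSpace ℝ (Fin n), ∀ m : Fin n → ℤ, m ≠ 0 →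
        y - y' = (WithLp.equiv 2 (Fin n → ℝ)).symm (fun i => (m i : ℝ)) →
        ‖y - x‖ < t → Real.sqrt n ≤ ‖y - y'‖ →
        sInf (actionSet L t x y) ≤ sInf (actionSet L t x y') :=
  stmt_17_general n hn L hL θ κ₁ c₀ hθ0 hθsl hlow hκmono hup
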